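/- arXiv:1401.1474 — 3 statements merged into one kernel-verified Lean document; each statement's English description precedes it below -/
import Mathlib

section
/- For every real h < -3/2 and each k ∈ {0, 2, 4}, the real number x_k = (1/3)·(h - 2·√(h²+3h+9)·cos((1/3)·(arctan(3√3/(3+2h)) + kπ))) satisfies x_k^3 - h·x_k^2 - (h+3)·x_k - 1 = 0. -/
/-!
Viète's trigonometric solution of a cubic. The shift `x = (h + y) / 3` turns the Shanks cubic into
`27 ρ = y³ - 3τ y - (2h + 3)τ` with `τ = h² + 3h + 9`, and for `y = -2√τ cos θ` the triple-angle
formula `cos 3θ = 4 cos³ θ - 3 cos θ` reduces this to `cos 3θ = -(3 + 2h) / (2√τ)`. Since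
`(3 + 2h)² + 27 = 4τ`, that is the cosine of `arctan (3√3 / (3 + 2h))` when `3 + 2h < 0`, and adding
an even multiple of `π` to the angle does not change it.
-/

open Real

theorem shanks_cubic_eq_zero_of_triple_angle {K : Type*} [Field K] [CharZero K] {h s c : K}
    (hs : s ^ 2 = h ^ 2 + 3 * h + 9) (hc : 2 * s * (4 * c ^ 3 - 3 * c) = -(3 + 2 * h)) :
    let x := (1 / 3) * (h - 2 * s * c)
    x ^ 3 - h * x ^ 2 - (h + 3) * x - 1 = 0 := by
  intro x
  linear_combination (-8 * c ^ 3 * s / 27) * hs - (h ^ 2 + 3 * h + 9) / 27 * hc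

theorem Real.cos_arctan_div (a b : ℝ) (ha : a ≠ 0) :
    cos (arctan (b / a)) = |a| / √(a ^ 2 + b ^ 2) := by
  have hsum : 1 + (b / a) ^ 2 = (a ^ 2 + b ^ 2) / a ^ 2 := by field_simp
  rw [cos_arctan, hsum, sqrt_div' _ (sq_nonneg a), sqrt_sq_eq_abs, one_div_div]

theorem Real.cos_add_nat_mul_pi_of_even (x : ℝ) {k : ℕ} (hk : Even k) :
    cos (x + k * π) = cos x := by
  obtain ⟨m, rfl⟩ := hk
  rw [← cos_add_nat_mul_two_pi x m]
  push_cast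
  ring_nf

theorem cos_arctan_shanks {h : ℝ} (hh : h < -3 / 2) :
    cos (arctan (3 * √3 / (3 + 2 * h))) = -(3 + 2 * h) / (2 * √(h ^ 2 + 3 * h + 9)) := by
  have hsum : (3 + 2 * h) ^ 2 + (3 * √3) ^ 2 = 2 ^ 2 * (h ^ 2 + 3 * h + 9) := by
    rw [mul_pow, sq_sqrt (by norm_num : (0 : ℝ) ≤ 3)]
    ring
  rw [cos_arctan_div _ _ (by linarith), abs_of_neg (by linarith), hsum,
    sqrt_mul' _ (by nlinarith), sqrt_sq (by norm_num)]

theorem shanks_zeros_trig_neg (h : ℝ) (hh : h < -3/2) (k : ℕ) (hk : k ∈ ({0, 2, 4} : Set ℕ)) :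
    let x := (1/3) * (h - 2 * Real.sqrt (h^2 + 3*h + 9) *
      Real.cos ((1/3) * (Real.arctan (3 * Real.sqrt 3 / (3 + 2*h)) + k * Real.pi)))
    x ^ 3 - h * x ^ 2 - (h + 3) * x - 1 = 0 := by
  have hτ : 0 < h ^ 2 + 3 * h + 9 := by nlinarith
  have hk_even : Even k := by
    rcases hk with rfl | rfl | rfl <;> decide
  apply shanks_cubic_eq_zero_of_triple_angle (sq_sqrt hτ.le)
  rw [← cos_three_mul, ← mul_assoc, mul_one_div_cancel three_ne_zero, one_mul,
    cos_add_nat_mul_pi_of_even _ hk_even, cos_arctan_shanks hh, mul_div_cancel₀ _ (by positivity)]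
end

section
/- 2cos(2π/7) = (1/3)·(-1 + 2√7·cos((1/3)·arctan(3√3))). -/
/-!
Both sides are roots of the Shanks cubic `x³ + x² - 2x - 1` lying in `(1, ∞)`, where the cubic is
strictly increasing. The left side is a root because `θ = 2π/7` satisfies `cos 4θ = cos 3θ`. The
right side is Viète's trigonometric solution: `x = (y - 1)/3` turns the cubic into
`(y³ - 21y - 7)/27`, and `y = 2√7 cos φ` gives `y³ - 21y = 14√7 cos 3φ`, where
`cos 3φ = cos (arctan 3√3) = 1/(2√7)`.
-/

open Real Set

def shanksCubic (x : ℝ) : ℝ := x ^ 3 + x ^ 2 - 2 * x - 1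

lemma shanksCubic_strictMonoOn : StrictMonoOn shanksCubic (Ici 1) := by
  intro a (ha : 1 ≤ a) b (hb : 1 ≤ b) hab
  have hfactor : shanksCubic b - shanksCubic a = (b - a) * (a ^ 2 + a * b + b ^ 2 + a + b - 2) := by
    unfold shanksCubic; ring
  have : 0 < (b - a) * (a ^ 2 + a * b + b ^ 2 + a + b - 2) :=
    mul_pos (sub_pos.2 hab) (by nlinarith)
  linarith

lemma shanksCubic_two_mul_cos_eq_zero {θ : ℝ} (h : cos (4 * θ) = cos (3 * θ)) (h1 : cos θ ≠ 1) :
    shanksCubic (2 * cos θ) = 0 := by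
  have h4 : cos (4 * θ) = 2 * (2 * cos θ ^ 2 - 1) ^ 2 - 1 := by
    rw [show 4 * θ = 2 * (2 * θ) by ring, cos_two_mul, cos_two_mul]
  rw [h4, cos_three_mul] at h
  have hprod : (cos θ - 1) * shanksCubic (2 * cos θ) = 0 := by
    unfold shanksCubic; linear_combination h
  exact (mul_eq_zero.1 hprod).resolve_left (sub_ne_zero.2 h1)

lemma shanksCubic_two_mul_cos_two_pi_div_seven : shanksCubic (2 * cos (2 * π / 7)) = 0 := by
  apply shanksCubic_two_mul_cos_eq_zero
  · rw [show 4 * (2 * π / 7) = 2 * π - 3 * (2 * π / 7) by ring, cos_two_pi_sub]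
  · rw [Ne, cos_eq_one_iff_of_lt_of_lt (by linarith [pi_pos]) (by linarith [pi_pos])]
    exact (by positivity : 2 * π / 7 ≠ 0)

lemma one_lt_two_mul_cos_two_pi_div_seven : 1 < 2 * cos (2 * π / 7) := by
  have : cos (π / 3) < cos (2 * π / 7) :=
    cos_lt_cos_of_nonneg_of_le_pi (by positivity) (by linarith [pi_pos]) (by linarith [pi_pos])
  rw [cos_pi_div_three] at this
  linarith

lemma two_mul_cos_cube_sub (r φ : ℝ) :
    (2 * r * cos φ) ^ 3 - 3 * r ^ 2 * (2 * r * cos φ) = 2 * r ^ 3 * cos (3 * φ) := by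
  rw [cos_three_mul]; ring

lemma cos_arctan_three_mul_sqrt_three : cos (arctan (3 * √3)) = 1 / (2 * √7) := by
  have h28 : 1 + (3 * √3) ^ 2 = 2 ^ 2 * 7 := by
    rw [mul_pow, sq_sqrt (by norm_num)]; norm_num
  rw [cos_arctan, h28, sqrt_mul (by norm_num), sqrt_sq (by norm_num)]

lemma shanksCubic_one_third_mul_neg_one_add (y : ℝ) :
    shanksCubic ((1/3) * (-1 + y)) = (y ^ 3 - 21 * y - 7) / 27 := by
  unfold shanksCubic; ring

lemma shanksCubic_viete_root :
    shanksCubic ((1/3) * (-1 + 2 * √7 * cos ((1/3) * arctan (3 * √3)))) = 0 := by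
  set φ := (1/3) * arctan (3 * √3)
  have h7 : √7 ^ 2 = 7 := sq_sqrt (by norm_num)
  have hcos : 2 * √7 * cos (3 * φ) = 1 := by
    rw [show 3 * φ = arctan (3 * √3) by ring, cos_arctan_three_mul_sqrt_three]
    field_simp
  have hy : (2 * √7 * cos φ) ^ 3 - 21 * (2 * √7 * cos φ) = 7 := by
    have hcube := two_mul_cos_cube_sub √7 φ
    rw [show √7 ^ 3 = 7 * √7 by rw [pow_succ, h7], h7] at hcube
    linear_combination hcube + 7 * hcos
  rw [shanksCubic_one_third_mul_neg_one_add, hy]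
  norm_num

lemma one_lt_viete_root : 1 < (1/3) * (-1 + 2 * √7 * cos ((1/3) * arctan (3 * √3))) := by
  have hφ_pos : 0 < (1/3) * arctan (3 * √3) := by
    have : 0 < arctan (3 * √3) := arctan_pos.2 (by positivity)
    positivity
  have hφ_lt : (1/3) * arctan (3 * √3) < π / 6 := by
    linarith [arctan_lt_pi_div_two (3 * √3)]
  have hcos : √3 / 2 < cos ((1/3) * arctan (3 * √3)) := by
    rw [← cos_pi_div_six]
    exact cos_lt_cos_of_nonneg_of_le_pi hφ_pos.le (by linarith [pi_pos]) hφ_lt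
  have h21 : 4 < √7 * √3 := by
    rw [← sqrt_mul (by norm_num), show (4 : ℝ) = √(4 ^ 2) from (sqrt_sq (by norm_num)).symm]
    exact sqrt_lt_sqrt (by norm_num) (by norm_num)
  nlinarith [sqrt_nonneg 7]

theorem cos_two_pi_seventh_identity :
    2 * Real.cos (2 * Real.pi / 7) =
      (1/3) * (-1 + 2 * Real.sqrt 7 * Real.cos ((1/3) * Real.arctan (3 * Real.sqrt 3))) :=
  shanksCubic_strictMonoOn.injOn one_lt_two_mul_cos_two_pi_div_seven.le one_lt_viete_root.le
    (shanksCubic_two_mul_cos_two_pi_div_seven.trans shanksCubic_viete_root.symm)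
end

section
/- If x1, x2, x3 are the real zeros of a Ramanujan cubic polynomial x^3 + px^2 + qx + r (i.e., p·r^(1/3) + 3·r^(2/3) + q = 0, r ≠ 0), then x1^(1/3) + x2^(1/3) + x3^(1/3) = (-p - 6r^(1/3) + 3(9r - pq)^(1/3))^(1/3), where all cube roots are real cube roots. -/
/-!
Let `a, b, c` be the real cube roots of the zeros and `t = ∛r`, so `abc = -t` by Vieta. With
`s = a + b + c`, `e = ab + ac + bc` and `m = se`, both `s³` and `e³` are affine in `m`
(the latter after using the Ramanujan relation `q = -pt - 3t²`). Multiplying them gives a cubic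
equation for `m`, which says exactly `9r - pq = (m + 3t)³`. Hence `∛(9r - pq) = m + 3t`, and the
radicand on the right-hand side is `-p - 6t + 3(m + 3t) = s³`.
-/

noncomputable def cbrt (x : ℝ) : ℝ := if x < 0 then -((-x) ^ ((1:ℝ)/3)) else x ^ ((1:ℝ)/3)

lemma cube_cbrt (x : ℝ) : cbrt x ^ 3 = x := by
  have rpow_third_cube {y : ℝ} (hy : 0 ≤ y) : (y ^ ((1:ℝ)/3)) ^ 3 = y := by
    simpa [one_div] using Real.rpow_inv_natCast_pow hy (n := 3) (by norm_num)
  unfold cbrt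
  split_ifs with hx
  · rw [Odd.neg_pow (by decide : Odd 3), rpow_third_cube (by linarith), neg_neg]
  · exact rpow_third_cube (not_lt.1 hx)

lemma cube_injective {x y : ℝ} (h : x ^ 3 = y ^ 3) : x = y :=
  (Odd.pow_inj (by decide : Odd 3)).1 h

lemma cbrt_cube (x : ℝ) : cbrt (x ^ 3) = x :=
  cube_injective (cube_cbrt (x ^ 3))

lemma vieta_cubic {K : Type*} [Field K] [CharZero K] {p q r x₁ x₂ x₃ : K}
    (h : ∀ x, x ^ 3 + p * x ^ 2 + q * x + r = (x - x₁) * (x - x₂) * (x - x₃)) :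
    x₁ + x₂ + x₃ = -p ∧ x₁ * x₂ + x₁ * x₃ + x₂ * x₃ = q ∧ x₁ * x₂ * x₃ = -r :=
  ⟨by linear_combination h 1 / 2 + h (-1) / 2 - h 0,
    by linear_combination h (-1) / 2 - h 1 / 2,
    by linear_combination h 0⟩

section RamanujanCubeRoots

variable {R : Type*} [CommRing R] {a b c t p q : R}

lemma add_add_pow_three_of_cubes (hp : a ^ 3 + b ^ 3 + c ^ 3 = -p) (habc : a * b * c = -t) :
    (a + b + c) ^ 3 = -p + 3 * ((a + b + c) * (a * b + a * c + b * c)) + 3 * t := by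
  linear_combination hp - 3 * habc

lemma mul_add_mul_add_mul_pow_three_of_cubes
    (hq : a ^ 3 * b ^ 3 + a ^ 3 * c ^ 3 + b ^ 3 * c ^ 3 = q) (habc : a * b * c = -t)
    (hram : p * t + 3 * t ^ 2 + q = 0) :
    (a * b + a * c + b * c) ^ 3 =
      -p * t - 6 * t ^ 2 - 3 * t * ((a + b + c) * (a * b + a * c + b * c)) := by
  linear_combination
    hq + (3 * ((a + b + c) * (a * b + a * c + b * c)) - 3 * (a * b * c - t)) * habc + hram

lemma nine_mul_pow_three_sub_mul_of_cubes (hp : a ^ 3 + b ^ 3 + c ^ 3 = -p)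
    (hq : a ^ 3 * b ^ 3 + a ^ 3 * c ^ 3 + b ^ 3 * c ^ 3 = q) (habc : a * b * c = -t)
    (hram : p * t + 3 * t ^ 2 + q = 0) :
    9 * t ^ 3 - p * q = ((a + b + c) * (a * b + a * c + b * c) + 3 * t) ^ 3 := by
  linear_combination (-(a * b + a * c + b * c) ^ 3) * add_add_pow_three_of_cubes hp habc +
    (-(-p + 3 * ((a + b + c) * (a * b + a * c + b * c)) + 3 * t)) *
      mul_add_mul_add_mul_pow_three_of_cubes hq habc hram - p * hram

end RamanujanCubeRoots

theorem ramanujan_cube_root_identity_general (p q r x1 x2 x3 : ℝ)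
    (hrcp : p * cbrt r + 3 * (cbrt r) ^ 2 + q = 0)
    (hfac : ∀ x : ℝ, x ^ 3 + p * x ^ 2 + q * x + r = (x - x1) * (x - x2) * (x - x3)) :
    cbrt x1 + cbrt x2 + cbrt x3 =
      cbrt (-p - 6 * cbrt r + 3 * cbrt (9 * r - p * q)) := by
  obtain ⟨hsum, hpair, hprod⟩ := vieta_cubic hfac
  have hp : cbrt x1 ^ 3 + cbrt x2 ^ 3 + cbrt x3 ^ 3 = -p := by
    simpa only [cube_cbrt] using hsum
  have hq :
      cbrt x1 ^ 3 * cbrt x2 ^ 3 + cbrt x1 ^ 3 * cbrt x3 ^ 3 + cbrt x2 ^ 3 * cbrt x3 ^ 3 = q := by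
    simpa only [cube_cbrt] using hpair
  have habc : cbrt x1 * cbrt x2 * cbrt x3 = -cbrt r := cube_injective <| by
    rw [mul_pow, mul_pow, Odd.neg_pow (by decide : Odd 3), cube_cbrt, cube_cbrt, cube_cbrt,
      cube_cbrt, hprod]
  have hkey := nine_mul_pow_three_sub_mul_of_cubes hp hq habc hrcp
  rw [cube_cbrt] at hkey
  rw [hkey, cbrt_cube]
  refine (cbrt_cube _).symm.trans (congrArg cbrt ?_)
  linear_combination add_add_pow_three_of_cubes hp habc

theorem ramanujan_cube_root_identity (p q r x1 x2 x3 : ℝ) (hr : r ≠ 0)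
    (hrcp : p * cbrt r + 3 * (cbrt r) ^ 2 + q = 0)
    (hfac : ∀ x : ℝ, x ^ 3 + p * x ^ 2 + q * x + r = (x - x1) * (x - x2) * (x - x3)) :
    cbrt x1 + cbrt x2 + cbrt x3 =
      cbrt (-p - 6 * cbrt r + 3 * cbrt (9 * r - p * q)) :=
  ramanujan_cube_root_identity_general p q r x1 x2 x3 hrcp hfac
end
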